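/- Let G be a compact topological group equipped with its Haar probability measure, and let μ be the product of the Haar measure on G and Lebesgue measure on ℝ^d. Let n ∈ ℕ and for t > 0 set w_t(Y) = t^{n/2} η(tY). Let s, s' > 0 and let f, f' : G × ℝ^d → ℂ be measurable with ∫ |f(x,Y)|² w_s(Y) dμ < ∞ and ∫ |f'(x,Y)|² w_{s'}(Y) dμ < ∞. Then the function (x,Y) ↦ conj(f(x,Y)) · f'(x,Y) · w_{(s+s')/2}(Y) is μ-integrable. (This is the well-definedness of the prequantum BKS pairing (11)–(12): the pairing integral converges absolutely for sections σ_s = f√Ω_s, σ'_{s'} = f'√Ω_{s'} of finite prequantum norm, since |Ω_t| = w_t and √(\bar Ω_s ∧ Ω_{s'}/(bε)) = w_{(s+s')/2}.) -/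

import Mathlib

open scoped Real BigOperators
open MeasureTheory

/-- `sinhc x = sinh x / x` for `x ≠ 0`, and `sinhc 0 = 1`. -/
noncomputable def sinhc (x : ℝ) : ℝ := if x = 0 then 1 else Real.sinh x / x

/-- The function `η(Y) = ∏_{i ∈ I} sinhc (α_i Y)` (equation (5) of the paper). -/
noncomputable def eta {d : ℕ} {I : Type*} [Fintype I]
    (α : I → (EuclideanSpace ℝ (Fin d) →ₗ[ℝ] ℝ)) (Y : EuclideanSpace ℝ (Fin d)) : ℝ :=
  ∏ i, sinhc (α i Y)

/-- The weight `w_t(Y) = t^{n/2} η(tY)`, i.e. `|Ω_t|`. -/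
noncomputable def w {d : ℕ} {I : Type*} [Fintype I]
    (α : I → (EuclideanSpace ℝ (Fin d) →ₗ[ℝ] ℝ)) (n : ℕ) (t : ℝ)
    (Y : EuclideanSpace ℝ (Fin d)) : ℝ :=
  t ^ ((n : ℝ) / 2) * eta α (t • Y)

/-!
`sinhc` is even and log-convex on `(0, ∞)`, since
`(log sinh - log)'' = 1 / x² - 1 / sinh² x ≥ 0` by `x < sinh x`. Hence
`η(mY)² ≤ η(sY) η(s'Y)` for `m = (s + s') / 2`, and so `w_m² ≤ K w_s w_{s'}` with
`K = m ^ n / (s ^ (n/2) s' ^ (n/2))`. By AM-GM,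
`|f| |f'| w_m ≤ √K / 2 (|f|² w_s + |f'|² w_{s'})`, which is integrable by hypothesis.
-/

open Set Real

lemma sinhc_of_ne {x : ℝ} (hx : x ≠ 0) : sinhc x = sinh x / x := if_neg hx

lemma sinhc_pos (x : ℝ) : 0 < sinhc x := by
  rcases eq_or_ne x 0 with rfl | hx
  · simp [sinhc]
  · rw [sinhc_of_ne hx]
    rcases hx.lt_or_gt with hneg | hpos
    · exact div_pos_of_neg_of_neg (sinh_neg_iff.mpr hneg) hneg
    · exact div_pos (sinh_pos_iff.mpr hpos) hpos

lemma sinhc_neg (x : ℝ) : sinhc (-x) = sinhc x := by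
  rcases eq_or_ne x 0 with rfl | hx
  · simp
  · rw [sinhc_of_ne (neg_ne_zero.mpr hx), sinhc_of_ne hx, sinh_neg, neg_div_neg_eq]

lemma sinhc_abs (x : ℝ) : sinhc |x| = sinhc x := by
  rcases abs_choice x with h | h <;> rw [h]
  exact sinhc_neg x

lemma measurable_sinhc : Measurable sinhc :=
  Measurable.ite (measurableSet_singleton 0) measurable_const
    (continuous_sinh.measurable.div measurable_id)

lemma convexOn_log_sinh_sub_log : ConvexOn ℝ (Ioi 0) (fun x => log (sinh x) - log x) := by
  refine convexOn_of_hasDerivWithinAt2_nonneg (convex_Ioi 0)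
    (f' := fun x => cosh x / sinh x - x⁻¹)
    (f'' := fun x => (sinh x * sinh x - cosh x * cosh x) / sinh x ^ 2 - -(x ^ 2)⁻¹)
    ?_ ?_ ?_ ?_
  · exact (continuous_sinh.continuousOn.log fun x hx => (sinh_pos_iff.mpr hx).ne').sub
      (continuousOn_log.mono fun x hx => (mem_Ioi.mp hx).ne')
  · rw [interior_Ioi]
    intro x hx
    have hlogsinh := (hasDerivAt_sinh x).log (sinh_pos_iff.mpr hx).ne'
    exact (hlogsinh.sub (hasDerivAt_log (mem_Ioi.mp hx).ne')).hasDerivWithinAt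
  · rw [interior_Ioi]
    intro x hx
    have hcoth := (hasDerivAt_cosh x).div (hasDerivAt_sinh x) (sinh_pos_iff.mpr hx).ne'
    exact (hcoth.sub (hasDerivAt_inv (mem_Ioi.mp hx).ne')).hasDerivWithinAt
  · rw [interior_Ioi]
    intro x (hx : 0 < x)
    have hcoth' : (sinh x * sinh x - cosh x * cosh x) / sinh x ^ 2 = -(sinh x ^ 2)⁻¹ := by
      rw [← sq, ← sq, ← neg_sub, cosh_sq_sub_sinh_sq x, neg_div, one_div]
    have hinv : (sinh x ^ 2)⁻¹ ≤ (x ^ 2)⁻¹ :=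
      inv_anti₀ (by positivity) (pow_le_pow_left₀ hx.le (self_lt_sinh_iff.mpr hx).le 2)
    rw [hcoth']
    linarith

lemma sinhc_eq_exp_log_sinh_sub_log {x : ℝ} (hx : 0 < x) :
    sinhc x = exp (log (sinh x) - log x) := by
  rw [exp_sub, exp_log (sinh_pos_iff.mpr hx), exp_log hx, sinhc_of_ne hx.ne']

lemma sinhc_midpoint_sq_le {x y : ℝ} (hx : 0 < x) (hy : 0 < y) :
    sinhc ((x + y) / 2) ^ 2 ≤ sinhc x * sinhc y := by
  have hconv := convexOn_log_sinh_sub_log.2 hx hy (by norm_num : (0 : ℝ) ≤ 1 / 2)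
    (by norm_num : (0 : ℝ) ≤ 1 / 2) (by norm_num)
  rw [smul_eq_mul, smul_eq_mul, smul_eq_mul, smul_eq_mul, ← mul_add, one_div_mul_eq_div] at hconv
  rw [sinhc_eq_exp_log_sinh_sub_log (by positivity), sinhc_eq_exp_log_sinh_sub_log hx,
    sinhc_eq_exp_log_sinh_sub_log hy, ← exp_nat_mul, ← exp_add, exp_le_exp]
  push_cast
  linarith

lemma sinhc_mul_midpoint_sq_le {s s' : ℝ} (hs : 0 < s) (hs' : 0 < s') (a : ℝ) :
    sinhc ((s + s') / 2 * a) ^ 2 ≤ sinhc (s * a) * sinhc (s' * a) := by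
  rcases eq_or_ne a 0 with rfl | ha
  · simp [sinhc]
  have habs : ∀ t, 0 < t → sinhc (t * a) = sinhc (t * |a|) := fun t ht => by
    rw [← sinhc_abs (t * a), abs_mul, abs_of_pos ht]
  rw [habs _ (by positivity), habs s hs, habs s' hs', ← mul_div_right_comm, add_mul]
  exact sinhc_midpoint_sq_le (by positivity) (by positivity)

section Weight

variable {d : ℕ} {I : Type*} [Fintype I] (α : I → (EuclideanSpace ℝ (Fin d) →ₗ[ℝ] ℝ))

lemma eta_nonneg (Y : EuclideanSpace ℝ (Fin d)) : 0 ≤ eta α Y :=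
  Finset.prod_nonneg fun _ _ => (sinhc_pos _).le

lemma measurable_eta : Measurable (eta α) :=
  Finset.measurable_prod _ fun i _ =>
    measurable_sinhc.comp (LinearMap.continuous_of_finiteDimensional (α i)).measurable

lemma eta_midpoint_smul_sq_le {s s' : ℝ} (hs : 0 < s) (hs' : 0 < s')
    (Y : EuclideanSpace ℝ (Fin d)) :
    eta α (((s + s') / 2) • Y) ^ 2 ≤ eta α (s • Y) * eta α (s' • Y) := by
  simp only [eta, map_smul, smul_eq_mul, ← Finset.prod_pow, ← Finset.prod_mul_distrib]
  exact Finset.prod_le_prod (fun _ _ => sq_nonneg _)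
    fun i _ => sinhc_mul_midpoint_sq_le hs hs' (α i Y)

lemma w_nonneg (n : ℕ) {t : ℝ} (ht : 0 ≤ t) (Y : EuclideanSpace ℝ (Fin d)) :
    0 ≤ w α n t Y :=
  mul_nonneg (rpow_nonneg ht _) (eta_nonneg α _)

lemma measurable_w (n : ℕ) (t : ℝ) : Measurable (w α n t) :=
  ((measurable_eta α).comp (measurable_const_smul t)).const_mul _

lemma w_midpoint_sq_le (n : ℕ) {s s' : ℝ} (hs : 0 < s) (hs' : 0 < s')
    (Y : EuclideanSpace ℝ (Fin d)) :
    w α n ((s + s') / 2) Y ^ 2 ≤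
      ((s + s') / 2) ^ (n : ℝ) / (s ^ ((n : ℝ) / 2) * s' ^ ((n : ℝ) / 2)) *
        w α n s Y * w α n s' Y := by
  have hpow : ∀ t : ℝ, 0 < t → 0 < t ^ ((n : ℝ) / 2) := fun t ht => rpow_pos_of_pos ht _
  have hsq : (((s + s') / 2) ^ ((n : ℝ) / 2)) ^ 2 = ((s + s') / 2) ^ (n : ℝ) := by
    rw [← rpow_natCast, ← rpow_mul (by positivity)]
    norm_num
  calc w α n ((s + s') / 2) Y ^ 2
      = ((s + s') / 2) ^ (n : ℝ) * eta α (((s + s') / 2) • Y) ^ 2 := by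
        rw [w, mul_pow, hsq]
    _ ≤ ((s + s') / 2) ^ (n : ℝ) * (eta α (s • Y) * eta α (s' • Y)) :=
        mul_le_mul_of_nonneg_left (eta_midpoint_smul_sq_le α hs hs' Y) (by positivity)
    _ = _ := by
        simp only [w]
        field_simp [(hpow s hs).ne', (hpow s' hs').ne']

end Weight

lemma mul_mul_abs_le_of_sq_le_mul {x y g a b K : ℝ} (ha : 0 ≤ a) (hb : 0 ≤ b)
    (hK : 0 ≤ K) (hg : g ^ 2 ≤ K * a * b) :
    x * y * |g| ≤ √K / 2 * (x ^ 2 * a + y ^ 2 * b) := by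
  have hsq : (x * y * |g|) ^ 2 ≤ (√K / 2 * (x ^ 2 * a + y ^ 2 * b)) ^ 2 := by
    rw [mul_pow (x * y), mul_pow (√K / 2), div_pow, sq_sqrt hK, sq_abs]
    nlinarith [four_mul_le_sq_add (x ^ 2 * a) (y ^ 2 * b),
      mul_nonneg (mul_self_nonneg (x * y)) hK, mul_le_mul_of_nonneg_left hg (sq_nonneg (x * y))]
  exact abs_le_of_sq_le_sq' hsq (by positivity) |>.2

lemma integrable_conj_mul_mul_of_sq_le_mul {X : Type*} [MeasurableSpace X] {μ : Measure X}
    {f f' : X → ℂ} {a b g : X → ℝ} {K : ℝ} (hK : 0 ≤ K) (ha : ∀ p, 0 ≤ a p)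
    (hb : ∀ p, 0 ≤ b p) (hg : ∀ p, g p ^ 2 ≤ K * a p * b p)
    (hmeas : AEStronglyMeasurable (fun p => starRingEnd ℂ (f p) * f' p * (g p : ℂ)) μ)
    (hf : Integrable (fun p => ‖f p‖ ^ 2 * a p) μ)
    (hf' : Integrable (fun p => ‖f' p‖ ^ 2 * b p) μ) :
    Integrable (fun p => starRingEnd ℂ (f p) * f' p * (g p : ℂ)) μ := by
  refine ((hf.add hf').const_mul (√K / 2)).mono' hmeas (.of_forall fun p => ?_)
  rw [norm_mul, norm_mul, Complex.norm_conj, Complex.norm_real, Real.norm_eq_abs]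
  exact mul_mul_abs_le_of_sq_le_mul (ha p) (hb p) hK (hg p)

theorem statement_7_general {d : ℕ} {I : Type*} [Fintype I]
    (α : I → (EuclideanSpace ℝ (Fin d) →ₗ[ℝ] ℝ)) (n : ℕ)
    {G : Type*} [MeasurableSpace G] (μG : Measure G)
    {s s' : ℝ} (hs : 0 < s) (hs' : 0 < s')
    (f f' : G × EuclideanSpace ℝ (Fin d) → ℂ)
    (hfm : Measurable f) (hf'm : Measurable f')
    (hf : Integrable (fun p => ‖f p‖ ^ 2 * w α n s p.2) (μG.prod volume))
    (hf' : Integrable (fun p => ‖f' p‖ ^ 2 * w α n s' p.2) (μG.prod volume)) :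
    Integrable
      (fun p => (starRingEnd ℂ) (f p) * f' p * ((w α n ((s + s') / 2) p.2 : ℝ) : ℂ))
      (μG.prod volume) := by
  have hmeas : Measurable fun p : G × EuclideanSpace ℝ (Fin d) =>
      starRingEnd ℂ (f p) * f' p * ((w α n ((s + s') / 2) p.2 : ℝ) : ℂ) :=
    ((Complex.continuous_conj.measurable.comp hfm).mul hf'm).mul
      (Complex.measurable_ofReal.comp ((measurable_w α n _).comp measurable_snd))
  exact integrable_conj_mul_mul_of_sq_le_mul (by positivity) (fun p => w_nonneg α n hs.le p.2)
    (fun p => w_nonneg α n hs'.le p.2) (fun p => w_midpoint_sq_le α n hs hs' p.2)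
    hmeas.aestronglyMeasurable hf hf'

/-- Well-definedness of the prequantum BKS pairing (11)–(12): for sections of finite
prequantum norm the pairing integral converges absolutely. -/
theorem statement_7 {d : ℕ} (hd : 1 ≤ d) {I : Type*} [Fintype I]
    (α : I → (EuclideanSpace ℝ (Fin d) →ₗ[ℝ] ℝ)) (n : ℕ)
    {G : Type*} [Group G] [TopologicalSpace G] [IsTopologicalGroup G] [CompactSpace G]
    [MeasurableSpace G] [BorelSpace G]
    (μG : Measure G) [μG.IsHaarMeasure] [IsProbabilityMeasure μG]
    {s s' : ℝ} (hs : 0 < s) (hs' : 0 < s')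
    (f f' : G × EuclideanSpace ℝ (Fin d) → ℂ)
    (hfm : Measurable f) (hf'm : Measurable f')
    (hf : Integrable (fun p => ‖f p‖ ^ 2 * w α n s p.2) (μG.prod volume))
    (hf' : Integrable (fun p => ‖f' p‖ ^ 2 * w α n s' p.2) (μG.prod volume)) :
    Integrable
      (fun p => (starRingEnd ℂ) (f p) * f' p * ((w α n ((s + s') / 2) p.2 : ℝ) : ℂ))
      (μG.prod volume) :=
  statement_7_general α n μG hs hs' f f' hfm hf'm hf hf'
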